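/- Let H be a complex Hilbert space, let D and E be bounded selfadjoint operators on H, let P be a bounded operator on H, and let r > 0. Suppose cos(tD) ∘ P = cos(tE) ∘ P for all t ∈ [0, r]. Then for every even Schwartz function f : ℝ → ℂ whose Fourier transform f̂ is supported in [-r, r], one has f(D) ∘ P = f(E) ∘ P. -/

import Mathlib

/-!
Fourier inversion, together with the evenness of `f` (hence of `f̂`), writes `f` as the cosine
transform `f x = (2π)⁻¹ ∫ f̂ s cos (s x) ds`, whose integrand vanishes outside `[-r, r]`. The
continuous functional calculus commutes with this Bochner integral, so
`f(D) P = (2π)⁻¹ ∫ f̂ s • cos(sD) P ds`; since `cos` is even, `cos(sD) P = cos(sE) P` for all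
`s ∈ [-r, r]`, and the two integrals agree.
-/

open MeasureTheory

/-- The Fourier transform with the normalization `f̂(t) = ∫ f(x) e^{-itx} dx`. -/
noncomputable def fourierHat (f : ℝ → ℂ) (t : ℝ) : ℂ :=
  ∫ x : ℝ, f x * Complex.exp (-(Complex.I * t * x))

/-- Continuous functional calculus of a (selfadjoint) bounded operator `D`
applied to a function `f : ℝ → ℂ`.  Since the spectrum of a selfadjoint
operator is real, we implement it via the `ℂ`-valued continuous functional
calculus applied to `z ↦ f (Re z)`. -/
noncomputable def fc {H : Type*} [NormedAddCommGroup H] [InnerProductSpace ℂ H]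
    [CompleteSpace H] (f : ℝ → ℂ) (D : H →L[ℂ] H) : H →L[ℂ] H :=
  cfc (fun z : ℂ => f z.re) D

open FourierTransform Complex

lemma fourierHat_eq_fourier (f : ℝ → ℂ) (s : ℝ) :
    fourierHat f s = 𝓕 f (s / (2 * Real.pi)) := by
  rw [Real.fourier_real_eq_integral_exp_smul, fourierHat]
  congr 1 with x
  rw [smul_eq_mul, mul_comm]
  congr 2
  push_cast
  field_simp

lemma fourierHat_neg_of_even {f : ℝ → ℂ} (hf : ∀ x, f (-x) = f x) (s : ℝ) :
    fourierHat f (-s) = fourierHat f s := by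
  rw [fourierHat, ← integral_neg_eq_self]
  congr 1 with x
  rw [hf]
  push_cast
  ring_nf

lemma SchwartzMap.continuous_fourierHat (f : SchwartzMap ℝ ℂ) :
    Continuous (fourierHat f) := by
  simp_rw [funext (fourierHat_eq_fourier f), ← SchwartzMap.fourier_coe]
  exact (𝓕 f).continuous.comp (continuous_id.div_const _)

lemma SchwartzMap.integrable_fourierHat (f : SchwartzMap ℝ ℂ) :
    Integrable (fourierHat f) := by
  simp_rw [funext (fourierHat_eq_fourier f), ← SchwartzMap.fourier_coe]
  exact (𝓕 f).integrable.comp_div (by positivity)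

lemma SchwartzMap.integral_fourierHat_mul_exp (f : SchwartzMap ℝ ℂ) (x : ℝ) :
    ∫ s, fourierHat f s * exp (↑(s * x) * I) = 2 * Real.pi * f x := by
  set g : ℝ → ℂ := fun ξ => exp (↑(2 * Real.pi * (x * ξ)) * I) • 𝓕 (f : ℝ → ℂ) ξ
  have hg : ∫ ξ, g ξ = f x := by
    rw [← f.continuous.fourierInv_fourier_eq f.integrable (𝓕 f).integrable, Real.fourierInv_eq']
    rfl
  calc ∫ s, fourierHat f s * exp (↑(s * x) * I) = ∫ s, g (s / (2 * Real.pi)) := by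
        congr 1 with s
        rw [fourierHat_eq_fourier, mul_comm]
        congr 2
        push_cast
        field_simp
    _ = 2 * Real.pi * f x := by
        rw [Measure.integral_comp_div, hg, abs_of_pos Real.two_pi_pos, Complex.real_smul]
        push_cast
        ring

lemma SchwartzMap.integral_fourierHat_mul_cos_of_even (f : SchwartzMap ℝ ℂ)
    (hf : ∀ x, f (-x) = f x) (x : ℝ) :
    ∫ s, fourierHat f s * cos (s * x) = 2 * Real.pi * f x := by
  have hint (y : ℝ) : Integrable fun s => fourierHat f s * exp (↑(s * y) * I) :=
    f.integrable_fourierHat.mul_bdd (by fun_prop : Continuous _).aestronglyMeasurable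
      (ae_of_all _ fun s => (norm_exp_ofReal_mul_I _).le)
  have hneg : ∫ s, fourierHat f s * exp (↑(s * -x) * I) =
      ∫ s, fourierHat f s * exp (↑(s * x) * I) := by
    rw [← integral_neg_eq_self]
    congr 1 with s
    rw [fourierHat_neg_of_even hf, neg_mul_neg]
  calc ∫ s, fourierHat f s * cos (s * x)
      = ((∫ s, fourierHat f s * exp (↑(s * x) * I)) +
          ∫ s, fourierHat f s * exp (↑(s * -x) * I)) / 2 := by
        rw [← integral_add (hint x) (hint (-x)), ← integral_div]
        congr 1 with s
        rw [cos, mul_neg]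
        push_cast
        ring_nf
    _ = 2 * Real.pi * f x := by
        rw [hneg, f.integral_fourierHat_mul_exp]
        ring

lemma norm_cos_ofReal_le_one (t : ℝ) : ‖cos t‖ ≤ 1 := by
  rw [← ofReal_cos, norm_real]
  exact Real.abs_cos_le_one t

lemma continuous_uncurry_mul_cos_re {c : ℝ → ℂ} (hc : Continuous c) :
    Continuous (Function.uncurry fun s (z : ℂ) => c s * cos (s * z.re)) := by
  fun_prop

lemma norm_mul_cos_ofReal_mul_le (a : ℂ) (s y : ℝ) : ‖a * cos (s * y)‖ ≤ ‖a‖ := by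
  rw [norm_mul, ← ofReal_mul]
  exact mul_le_of_le_one_right (norm_nonneg _) (norm_cos_ofReal_le_one _)

section FunctionalCalculus

variable {H : Type*} [NormedAddCommGroup H] [InnerProductSpace ℂ H] [CompleteSpace H]
  {c : ℝ → ℂ}

lemma fc_const_mul_cos (D : H →L[ℂ] H) (a : ℂ) (s : ℝ) :
    fc (fun x => a * cos (s * x)) D = a • fc (fun x => cos (s * x)) D :=
  cfc_const_mul a _ D

variable {D : H →L[ℂ] H}

lemma fc_integral_mul_cos (hD : IsStarNormal D) (hc : Continuous c) (hci : Integrable c) :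
    fc (fun x => ∫ s, c s * cos (s * x)) D = ∫ s, c s • fc (fun x => cos (s * x)) D := by
  rw [fc, cfc_integral _ (‖c ·‖) D (continuous_uncurry_mul_cos_re hc).continuousOn
    (ae_of_all _ fun s z _ => norm_mul_cos_ofReal_mul_le (c s) s z.re)
    hci.norm.hasFiniteIntegral]
  simp_rw [← fc_const_mul_cos]
  rfl

lemma integrable_smul_fc_cos (hD : IsStarNormal D) (hc : Continuous c) (hci : Integrable c) :
    Integrable fun s => c s • fc (fun x => cos (s * x)) D := by
  simp_rw [← fc_const_mul_cos]
  exact integrable_cfc _ (‖c ·‖) D (continuous_uncurry_mul_cos_re hc).continuousOn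
    (ae_of_all _ fun s z _ => norm_mul_cos_ofReal_mul_le (c s) s z.re)
    hci.norm.hasFiniteIntegral

lemma fc_integral_mul_cos_comp_eq {D E P : H →L[ℂ] H} (hD : IsStarNormal D)
    (hE : IsStarNormal E) (hc : Continuous c) (hci : Integrable c)
    (hcos : ∀ s ∈ Function.support c,
      fc (fun x => cos (s * x)) D ∘L P = fc (fun x => cos (s * x)) E ∘L P) :
    fc (fun x => ∫ s, c s * cos (s * x)) D ∘L P = fc (fun x => ∫ s, c s * cos (s * x)) E ∘L P := by
  let compP : (H →L[ℂ] H) →L[ℂ] H →L[ℂ] H := (ContinuousLinearMap.compL ℂ H H H).flip P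
  change compP _ = compP _
  rw [fc_integral_mul_cos hD hc hci, fc_integral_mul_cos hE hc hci,
    ← ContinuousLinearMap.integral_comp_comm _ (integrable_smul_fc_cos hD hc hci),
    ← ContinuousLinearMap.integral_comp_comm _ (integrable_smul_fc_cos hE hc hci)]
  congr 1
  funext s
  by_cases hs : c s = 0
  · simp [hs]
  · rw [map_smul, map_smul]
    exact congrArg (c s • ·) (hcos s hs)

end FunctionalCalculus

theorem statement3_general {H : Type*} [NormedAddCommGroup H] [InnerProductSpace ℂ H]
    [CompleteSpace H] (D E P : H →L[ℂ] H)
    (hD : IsSelfAdjoint D) (hE : IsSelfAdjoint E) (r : ℝ)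
    (hcos : ∀ t ∈ Set.Icc (0 : ℝ) r,
      fc (fun x : ℝ => Complex.cos ((t : ℂ) * x)) D ∘L P =
        fc (fun x : ℝ => Complex.cos ((t : ℂ) * x)) E ∘L P)
    (f : SchwartzMap ℝ ℂ) (hf_even : ∀ x : ℝ, f (-x) = f x)
    (hf_supp : Function.support (fourierHat fun x => f x) ⊆ Set.Icc (-r) r) :
    fc (fun x => f x) D ∘L P = fc (fun x => f x) E ∘L P := by
  have hcos_Icc : ∀ t ∈ Set.Icc (-r) r,
      fc (fun x : ℝ => cos (t * x)) D ∘L P = fc (fun x : ℝ => cos (t * x)) E ∘L P := by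
    intro t ⟨hrt, htr⟩
    rcases le_total 0 t with ht | ht
    · exact hcos t ⟨ht, htr⟩
    · simpa [neg_mul, cos_neg] using hcos (-t) ⟨neg_nonneg.2 ht, by linarith⟩
  let c : ℝ → ℂ := fun s => ((2 * Real.pi)⁻¹ : ℂ) * fourierHat f s
  have hf : (fun x => f x) = fun x : ℝ => ∫ s, c s * cos (s * x) := by
    funext x
    simp_rw [c, mul_assoc, integral_const_mul, f.integral_fourierHat_mul_cos_of_even hf_even]
    field_simp
  rw [hf]
  exact fc_integral_mul_cos_comp_eq hD.isStarNormal hE.isStarNormal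
    (continuous_const.mul f.continuous_fourierHat) (f.integrable_fourierHat.const_mul _)
    fun s hs => hcos_Icc s (hf_supp (Function.support_mul_subset_right _ _ hs))

/-- if `cos(tD) P = cos(tE) P` for all `t ∈ [0, r]`, then
`f(D) P = f(E) P` for every even Schwartz function `f` whose Fourier transform
is supported in `[-r, r]`. -/
theorem statement3 {H : Type*} [NormedAddCommGroup H] [InnerProductSpace ℂ H]
    [CompleteSpace H] (D E P : H →L[ℂ] H)
    (hD : IsSelfAdjoint D) (hE : IsSelfAdjoint E) (r : ℝ) (hr : 0 < r)
    (hcos : ∀ t ∈ Set.Icc (0 : ℝ) r,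
      fc (fun x : ℝ => Complex.cos ((t : ℂ) * x)) D ∘L P =
        fc (fun x : ℝ => Complex.cos ((t : ℂ) * x)) E ∘L P)
    (f : SchwartzMap ℝ ℂ) (hf_even : ∀ x : ℝ, f (-x) = f x)
    (hf_supp : Function.support (fourierHat fun x => f x) ⊆ Set.Icc (-r) r) :
    fc (fun x => f x) D ∘L P = fc (fun x => f x) E ∘L P :=
  statement3_general D E P hD hE r hcos f hf_even hf_supp
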